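/- Let M_1, …, M_n be DFAs over a common alphabet Σ, with each accepting set F_i nonempty and every state of M_i reachable from its initial state s_i, and let G and H be the labeled graphs obtained from the first reduction construction applied to M_1, …, M_n. Then ⋃_{i=1}^n L(M_i) = Σ* if and only if ⟨G⟩ ⊆ ⟨H⟩. -/

import Mathlib

/-- A labeled graph over vertex type `V` and alphabet `A`, given by its
labeled-edge relation: `Edge p a q` means there is an edge labeled `a`
from `p` to `q`. -/
structure LabeledGraph (V A : Type) where
  Edge : V → A → V → Prop

namespace LabeledGraph

variable {V A : Type}

/-- `G.Walk p w q` : there is a (finite) path from `p` to `q` labeled `w`. -/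
def Walk (G : LabeledGraph V A) : V → List A → V → Prop
  | p, [], q => p = q
  | p, a :: w, q => ∃ r, G.Edge p a r ∧ Walk G r w q

/-- The follower set of a vertex: labels of finite paths starting at `q`. -/
def follower (G : LabeledGraph V A) (q : V) : Set (List A) :=
  { w | ∃ q', G.Walk q w q' }

/-- The transition action on sets of vertices: `S·w`. -/
def transSet (G : LabeledGraph V A) (S : Set V) (w : List A) : Set V :=
  { q' | ∃ q ∈ S, G.Walk q w q' }

/-- `G` is deterministic (right-resolving). -/
def Deterministic (G : LabeledGraph V A) : Prop :=
  ∀ p a q q', G.Edge p a q → G.Edge p a q' → q = q'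

/-- `G` is essential: every vertex has an outgoing and an incoming edge. -/
def Essential (G : LabeledGraph V A) : Prop :=
  ∀ q, (∃ a r, G.Edge q a r) ∧ (∃ a p, G.Edge p a q)

/-- The sofic shift presented by `G`: labels of bi-infinite paths. -/
def shift (G : LabeledGraph V A) : Set (ℤ → A) :=
  { x | ∃ v : ℤ → V, ∀ j : ℤ, G.Edge (v j) (x j) (v (j + 1)) }

/-- `w` is a synchronizing word for `G`: `Q_G · w` is a singleton. -/
def SyncWord (G : LabeledGraph V A) (w : List A) : Prop :=
  ∃ r, G.transSet Set.univ w = {r}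

/-- A vertex `q` is synchronizing: some word synchronizes to `q`. -/
def SyncVertex (G : LabeledGraph V A) (q : V) : Prop :=
  ∃ w, G.transSet Set.univ w = {q}

/-- `G` is synchronizing: every vertex is synchronizing. -/
def Synchronizing (G : LabeledGraph V A) : Prop :=
  ∀ q, G.SyncVertex q

/-- `G` is follower-separated. -/
def FollowerSeparated (G : LabeledGraph V A) : Prop :=
  ∀ p q, G.follower p = G.follower q → p = q

/-- `G` is irreducible (strongly connected). -/
def StronglyConnected (G : LabeledGraph V A) : Prop :=
  ∀ p q, ∃ w, G.Walk p w q

/-- `q` is reachable from `p`. -/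
def Reachable (G : LabeledGraph V A) (p q : V) : Prop :=
  ∃ w, G.Walk p w q

/-- `C` is an irreducible component: an equivalence class of mutual reachability. -/
def IsIrredComponent (G : LabeledGraph V A) (C : Set V) : Prop :=
  ∃ p, C = { q | G.Reachable p q ∧ G.Reachable q p }

/-- `C` is terminal: everything reachable from `C` lies in `C`. -/
def TerminalSet (G : LabeledGraph V A) (C : Set V) : Prop :=
  ∀ p ∈ C, ∀ q, G.Reachable p q → q ∈ C

/-- `C` is initial: everything that reaches `C` lies in `C`. -/
def InitialSet (G : LabeledGraph V A) (C : Set V) : Prop :=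
  ∀ q ∈ C, ∀ p, G.Reachable p q → p ∈ C

/-- Subgraph induced by a set `P` of vertices. -/
def induce (G : LabeledGraph V A) (P : Set V) : LabeledGraph P A where
  Edge := fun p a q => G.Edge p.1 a q.1

/-- The graph `Ĝ`: vertices are ordered pairs of distinct vertices of `G`,
with an edge labeled `a` from `(p₁,p₂)` to `(q₁,q₂)` iff `G` has edges labeled
`a` from `p₁` to `q₁` and from `p₂` to `q₂`. -/
def pairGraph (G : LabeledGraph V A) : LabeledGraph { pq : V × V // pq.1 ≠ pq.2 } A where
  Edge := fun x a y => G.Edge x.1.1 a y.1.1 ∧ G.Edge x.1.2 a y.1.2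

end LabeledGraph

/-- The word `w` appears in the bi-infinite sequence `x`. -/
def AppearsIn {A : Type} (w : List A) (x : ℤ → A) : Prop :=
  ∃ i : ℤ, ∀ n : Fin w.length, x (i + (n : ℕ)) = w.get n

/-- The language of a subset of the full shift: all finite words appearing
in some point of `X`. -/
def lang {A : Type} (X : Set (ℤ → A)) : Set (List A) :=
  { w | ∃ x ∈ X, AppearsIn w x }

/-- `X` is a shift space. -/
def IsShiftSpace {A : Type} (X : Set (ℤ → A)) : Prop :=
  ∃ F : Set (List A), X = { x | ∀ w ∈ F, ¬ AppearsIn w x }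

/-- `X` is a shift of finite type. -/
def IsSFT {A : Type} (X : Set (ℤ → A)) : Prop :=
  ∃ F : Set (List A), F.Finite ∧ X = { x | ∀ w ∈ F, ¬ AppearsIn w x }

/-- `w` is intrinsically synchronizing for `X`. -/
def IntrinsicallySync {A : Type} (X : Set (ℤ → A)) (w : List A) : Prop :=
  w ∈ lang X ∧ ∀ u v, u ++ w ∈ lang X → w ++ v ∈ lang X → u ++ (w ++ v) ∈ lang X

/-- `X` is an irreducible shift space. -/
def IrreducibleShift {A : Type} (X : Set (ℤ → A)) : Prop :=
  ∀ u ∈ lang X, ∀ v ∈ lang X, ∃ w, u ++ (w ++ v) ∈ lang X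

/-- The follower set of a word `u` in `X`. -/
def followerX {A : Type} (X : Set (ℤ → A)) (u : List A) : Set (List A) :=
  { w | u ++ w ∈ lang X }

/-- `X` is `M`-step: every word of `B(X)` of length at least `M` is
intrinsically synchronizing for `X`. -/
def MStep {A : Type} (X : Set (ℤ → A)) (M : ℕ) : Prop :=
  ∀ w ∈ lang X, M ≤ w.length → IntrinsicallySync X w

/-- A deterministic finite automaton over state type `Q` and alphabet `A`. -/
structure DFA' (Q A : Type) where
  step : Q → A → Q
  start : Q
  accept : Set Q

/-- Extended transition function. -/
def DFA'.evalFrom {Q A : Type} (M : DFA' Q A) (q : Q) (w : List A) : Q :=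
  w.foldl M.step q

/-- The language of a DFA. -/
def DFA'.lang {Q A : Type} (M : DFA' Q A) : Set (List A) :=
  { w | M.evalFrom M.start w ∈ M.accept }

/-- Alphabet `Σ ∪ {◁, ▷, *, ℓ}`. -/
inductive Sym1 (A : Type) : Type
  | letter : A → Sym1 A
  | lm : Sym1 A    -- ◁
  | rm : Sym1 A    -- ▷
  | star : Sym1 A  -- *
  | ell : Sym1 A   -- ℓ

/-- Vertices of the first reduction construction: the pre-initial states `p_i`,
the DFA states, and the two special states `p*` and `s*`. -/
inductive V1 {n : ℕ} (Q : Fin n → Type) : Type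
  | pre : Fin n → V1 Q
  | st : (i : Fin n) → Q i → V1 Q
  | pstar : V1 Q
  | sstar : V1 Q

/-- Edges of the first reduction construction. -/
inductive Red1Edge {n : ℕ} {Q : Fin n → Type} {A : Type} (M : ∀ i, DFA' (Q i) A) :
    V1 Q → Sym1 A → V1 Q → Prop
  /-- self loop labeled `*` on `p_i` -/
  | preLoop (i : Fin n) : Red1Edge M (.pre i) .star (.pre i)
  /-- the embedded DFA transitions -/
  | dfaStep (i : Fin n) (q : Q i) (a : A) :
      Red1Edge M (.st i q) (.letter a) (.st i ((M i).step q a))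
  /-- edge labeled `◁` from `p_i` to `s_i` -/
  | enter (i : Fin n) : Red1Edge M (.pre i) .lm (.st i ((M i).start))
  /-- edge labeled `▷` from each accepting state to `p_1` -/
  | exitAcc (i : Fin n) (q : Q i) (j : Fin n) :
      q ∈ (M i).accept → (j : ℕ) = 0 → Red1Edge M (.st i q) .rm (.pre j)
  /-- edge labeled `ℓ` from each state of `M_i` to `s_i` -/
  | reset (i : Fin n) (q : Q i) : Red1Edge M (.st i q) .ell (.st i ((M i).start))
  /-- self loop labeled `*` on `p*` -/
  | pstarLoop : Red1Edge M .pstar .star .pstar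
  /-- edge labeled `◁` from `p*` to `s*` -/
  | pstarEnter : Red1Edge M .pstar .lm .sstar
  /-- edge labeled `▷` from `s*` to `p_1` -/
  | sstarExit (j : Fin n) : (j : ℕ) = 0 → Red1Edge M .sstar .rm (.pre j)
  /-- self loop labeled `a` on `s*` for each `a ∈ Σ` -/
  | sstarLoop (a : A) : Red1Edge M .sstar (.letter a) .sstar
  /-- edge labeled `ℓ` from `p_i` to `p_{i+1}` for `i = 1, …, n-1` -/
  | chain (i j : Fin n) : (j : ℕ) = (i : ℕ) + 1 → Red1Edge M (.pre i) .ell (.pre j)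
  /-- edge labeled `ℓ` from `p_n` to `s*` -/
  | lastChain (i : Fin n) : (i : ℕ) + 1 = n → Red1Edge M (.pre i) .ell .sstar

/-- The labeled graph `G` of the first reduction construction. -/
def Red1 {n : ℕ} {Q : Fin n → Type} {A : Type} (M : ∀ i, DFA' (Q i) A) :
    LabeledGraph (V1 Q) (Sym1 A) where
  Edge := Red1Edge M

/-!
Edges into `p*` come only from `p*`, so along a bi-infinite path of `G` the visits to `p*` form
a left-infinite run. A point of `⟨G⟩` that leaves `p*` therefore reads `… * * ◁` and then, from
`s*`, letters: either forever, or a word `w` followed by `▷` into `p₁`. In `H` the same point is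
read by looping at `p_i`, entering `s_i` at `◁` and running `M_i`, where `w ∈ L(M_i)` (any `i`
if no `▷` comes); the point `*^ℤ` is the loop at `p₁`. Conversely `… * * ◁ w ▷ * * …` lies in
`⟨G⟩` through `p*` and `s*`, and a path of `H` reading it has to enter some `s_i` at `◁`, follow
`M_i` along `w` and leave by `▷` from an accepting state, so `w ∈ L(M_i)`.
-/

open Set

def window {A : Type} (x : ℤ → A) (k : ℤ) : ℕ → List A
  | 0 => []
  | t + 1 => x k :: window x (k + 1) t

/-- The bi-infinite sequence `… d d l₀ l₁ … d d …`, with `l₀` at position `0`. -/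
def pad {A : Type} (d : A) (l : List A) : ℤ → A :=
  fun j => if 0 ≤ j then l.getD j.toNat d else d

section Window

variable {A : Type}

theorem window_succ' (x : ℤ → A) (k : ℤ) (t : ℕ) :
    window x k (t + 1) = window x k t ++ [x (k + t)] := by
  induction t generalizing k with
  | zero => simp [window]
  | succ t ih =>
    rw [window, ih, window]
    simp [add_assoc, add_comm (1 : ℤ)]

theorem forall_mem_window {p : A → Prop} {x : ℤ → A} {k : ℤ} {t : ℕ}
    (h : ∀ s < t, p (x (k + s))) : ∀ a ∈ window x k t, p a := by
  induction t generalizing k with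
  | zero => simp [window]
  | succ t ih =>
    simp only [window, List.mem_cons, forall_eq_or_imp]
    refine ⟨by simpa using h 0 t.succ_pos, ih fun s hs => ?_⟩
    simpa [add_assoc, add_comm (1 : ℤ)] using h (s + 1) (by omega)

theorem window_eq_of_getElem {x : ℤ → A} {k : ℤ} {l : List A}
    (h : ∀ s (hs : s < l.length), x (k + s) = l[s]) : window x k l.length = l := by
  induction l generalizing k with
  | nil => rfl
  | cons a l ih =>
    rw [List.length_cons, window, ih fun s hs => ?_]
    · have h0 := h 0 (by simp)
      simp only [Nat.cast_zero, add_zero, List.getElem_cons_zero] at h0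
      rw [h0]
    · have hs1 := h (s + 1) (by simpa using hs)
      simp only [List.getElem_cons_succ, Nat.cast_add, Nat.cast_one] at hs1
      rwa [add_comm (s : ℤ), ← add_assoc] at hs1

theorem window_pad (d : A) (l : List A) : window (pad d l) 0 l.length = l :=
  window_eq_of_getElem fun s hs => by simp [pad, hs]

theorem pad_of_neg {d : A} {l : List A} {j : ℤ} (hj : j < 0) : pad d l j = d := by
  simp [pad, not_le.2 hj]

theorem pad_of_length_le {d : A} {l : List A} {j : ℤ} (hj : l.length ≤ j) : pad d l j = d := by
  simp [pad, show 0 ≤ j by omega, List.getElem?_eq_none (show l.length ≤ j.toNat by omega)]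

end Window

namespace LabeledGraph

variable {V A : Type} {G : LabeledGraph V A}

variable (G) in
def IsPathOn (x : ℤ → A) (v : ℤ → V) (s : Set ℤ) : Prop :=
  ∀ j ∈ s, G.Edge (v j) (x j) (v (j + 1))

theorem mem_shift_iff {x : ℤ → A} : x ∈ G.shift ↔ ∃ v, G.IsPathOn x v univ := by
  simp [shift, IsPathOn]

theorem mem_shift_induce_iff {P : Set V} {x : ℤ → A} :
    x ∈ (G.induce P).shift ↔ ∃ v, (∀ j, v j ∈ P) ∧ G.IsPathOn x v univ := by
  constructor
  · rintro ⟨v, hv⟩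
    exact ⟨fun j => (v j).1, fun j => (v j).2, fun j _ => hv j⟩
  · rintro ⟨v, hvP, hv⟩
    exact ⟨fun j => ⟨v j, hvP j⟩, fun j => hv j trivial⟩

theorem IsPathOn.mono {x : ℤ → A} {v : ℤ → V} {s t : Set ℤ} (h : G.IsPathOn x v s)
    (hts : t ⊆ s) : G.IsPathOn x v t :=
  fun j hj => h j (hts hj)

theorem isPathOn_const {x : ℤ → A} {s : Set ℤ} {p : V} {a : A} (hp : G.Edge p a p)
    (hx : ∀ j ∈ s, x j = a) : G.IsPathOn x (fun _ => p) s :=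
  fun j hj => hx j hj ▸ hp

theorem IsPathOn.piecewise {x : ℤ → A} {u v : ℤ → V} {s : Set ℤ} {k : ℤ}
    (hu : G.IsPathOn x u (s ∩ Iio k)) (hv : G.IsPathOn x v (s ∩ Ici k)) (huv : u k = v k) :
    G.IsPathOn x (fun j => if j < k then u j else v j) s := by
  intro j hj
  by_cases hjk : j < k
  · have h := hu j ⟨hj, hjk⟩
    by_cases hj1 : j + 1 < k
    · simpa [hjk, hj1] using h
    · rw [show j + 1 = k by omega] at h ⊢
      simpa [hjk, ← huv] using h
  · simpa [hjk, show ¬ j + 1 < k by omega] using hv j ⟨hj, not_lt.1 hjk⟩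

theorem walk_append {p q : V} {u w : List A} :
    G.Walk p (u ++ w) q ↔ ∃ r, G.Walk p u r ∧ G.Walk r w q := by
  induction u generalizing p with
  | nil => simp [Walk]
  | cons a u ih => simp only [List.cons_append, Walk, ih]; grind

theorem walk_singleton {p q : V} {a : A} : G.Walk p [a] q ↔ G.Edge p a q := by
  simp [Walk]

theorem Walk.exists_isPathOn {x : ℤ → A} {k : ℤ} {t : ℕ} {p q : V}
    (h : G.Walk p (window x k t) q) :
    ∃ u, u k = p ∧ u (k + t) = q ∧ G.IsPathOn x u (Ico k (k + t)) := by
  induction t generalizing k p with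
  | zero => exact ⟨fun _ => q, by simpa [window, Walk] using h.symm, rfl, by simp [IsPathOn]⟩
  | succ t ih =>
    obtain ⟨r, hpr, hr⟩ := h
    obtain ⟨u, hur, huq, hu⟩ := ih hr
    refine ⟨Function.update u k p, by simp, ?_, fun j hj => ?_⟩
    · rw [Function.update_of_ne (by omega)]
      simpa [add_assoc, add_comm (1 : ℤ)] using huq
    · simp only [mem_Ico] at hj
      rw [Function.update_of_ne (by omega : j + 1 ≠ k)]
      rcases eq_or_lt_of_le hj.1 with rfl | hkj
      · simpa [hur] using hpr
      · rw [Function.update_of_ne hkj.ne']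
        exact hu j ⟨by omega, by omega⟩

theorem IsPathOn.walk_window {x : ℤ → A} {u : ℤ → V} {k : ℤ} {t : ℕ}
    (h : G.IsPathOn x u (Ico k (k + t))) : G.Walk (u k) (window x k t) (u (k + t)) := by
  induction t generalizing k with
  | zero => simp [window, Walk]
  | succ t ih =>
    refine ⟨u (k + 1), h k (by simp), ?_⟩
    have hrest := ih (k := k + 1) (h.mono fun j hj => by simp only [mem_Ico] at hj ⊢; omega)
    simpa [add_assoc, add_comm (1 : ℤ)] using hrest

theorem exists_isPathOn_Ici {x : ℤ → A} {k : ℤ} {S : Set V}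
    (hS : ∀ j, k ≤ j → ∀ p ∈ S, ∃ q ∈ S, G.Edge p (x j) q) {p : V} (hp : p ∈ S) :
    ∃ u, u k = p ∧ G.IsPathOn x u (Ici k) := by
  choose f hfS hf using hS
  let g : ℕ → S := fun t => Nat.rec ⟨p, hp⟩
    (fun t q => ⟨f (k + t) (by omega) q q.2, hfS _ _ _ q.2⟩) t
  refine ⟨fun j => (g (j - k).toNat).1, by simp [g], fun j hj => ?_⟩
  obtain ⟨t, rfl⟩ : ∃ t : ℕ, j = k + t := ⟨(j - k).toNat, by simp only [mem_Ici] at hj; omega⟩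
  simp only [show (k + t - k).toNat = t by omega, show (k + t + 1 - k).toNat = t + 1 by omega]
  exact hf _ _ _ _

theorem pad_mem_shift {d : A} {l : List A} {p q : V} (hp : G.Edge p d p) (hq : G.Edge q d q)
    (h : G.Walk p l q) : pad d l ∈ G.shift := by
  rw [← window_pad d l] at h
  obtain ⟨u, hu0, hul, hu⟩ := h.exists_isPathOn
  have hright : G.IsPathOn (pad d l) _ (Ici 0) :=
    IsPathOn.piecewise (k := l.length) (hu.mono fun j hj => by simp_all)
      (isPathOn_const hq fun j hj => pad_of_length_le hj.2) (by simpa using hul)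
  refine mem_shift_iff.2 ⟨_, IsPathOn.piecewise (k := 0)
    (isPathOn_const hp fun j hj => pad_of_neg hj.2) (by simpa using hright) ?_⟩
  show p = if (0 : ℤ) < l.length then u 0 else q
  split_ifs with hl
  · exact hu0.symm
  · simpa [hu0, show l.length = 0 by omega] using hul

end LabeledGraph

theorem Sym1.exists_map_letter_eq {A : Type} {l : List (Sym1 A)}
    (h : ∀ a ∈ l, ∃ b, a = .letter b) : ∃ w : List A, w.map .letter = l := by
  induction l with
  | nil => exact ⟨[], rfl⟩
  | cons a l ih =>
    obtain ⟨b, rfl⟩ := h a (by simp)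
    obtain ⟨w, rfl⟩ := ih fun a ha => h a (by simp [ha])
    exact ⟨b :: w, rfl⟩

theorem Int.exists_last_of_not_forall_ge {p : ℤ → Prop} {a : ℤ} (ha : p a)
    (h : ¬ ∀ j, a ≤ j → p j) : ∃ m, a ≤ m ∧ (∀ j, a ≤ j → j ≤ m → p j) ∧ ¬ p (m + 1) := by
  push Not at h
  obtain ⟨m, ⟨ham, hm⟩, hleast⟩ :=
    Int.exists_least_of_bdd ⟨a, fun z hz => hz.1⟩ (h.imp fun _ hj => hj)
  have ham' : a < m := lt_of_le_of_ne ham (by rintro rfl; exact hm ha)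
  refine ⟨m - 1, by omega, fun j haj hjm => ?_, by simpa using hm⟩
  by_contra hj
  have hmj := hleast j ⟨haj, hj⟩
  omega

namespace Red1Edge

variable {n : ℕ} {Q : Fin n → Type} {A : Type} {M : ∀ i, DFA' (Q i) A}

theorem eq_pstar_of_target {p : V1 Q} {a : Sym1 A} (h : Red1Edge M p a .pstar) : p = .pstar := by
  cases h; rfl

theorem eq_star_of_pstar {a : Sym1 A} (h : Red1Edge M (Q := Q) .pstar a .pstar) : a = .star := by
  cases h; rfl

theorem of_pstar_of_ne {a : Sym1 A} {r : V1 Q} (h : Red1Edge M .pstar a r) (hr : r ≠ .pstar) :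
    a = .lm ∧ r = .sstar := by
  cases h
  · exact absurd rfl hr
  · exact ⟨rfl, rfl⟩

theorem exists_letter_of_sstar {a : Sym1 A} (h : Red1Edge M (Q := Q) .sstar a .sstar) :
    ∃ b, a = .letter b := by
  cases h; exact ⟨_, rfl⟩

theorem of_sstar_of_ne {a : Sym1 A} {r : V1 Q} (h : Red1Edge M .sstar a r) (hr : r ≠ .sstar) :
    a = .rm ∧ ∃ j : Fin n, (j : ℕ) = 0 ∧ r = .pre j := by
  cases h with
  | sstarExit j hj => exact ⟨rfl, j, hj, rfl⟩
  | sstarLoop b => exact absurd rfl hr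

theorem of_lm {p r : V1 Q} (h : Red1Edge M p .lm r) (hp : p ≠ .pstar) :
    ∃ i, p = .pre i ∧ r = .st i (M i).start := by
  cases h
  · exact ⟨_, rfl, rfl⟩
  · exact absurd rfl hp

theorem mem_accept_of_rm {i : Fin n} {q : Q i} {r : V1 Q} (h : Red1Edge M (.st i q) .rm r) :
    q ∈ (M i).accept := by
  cases h; assumption

theorem st_letter_iff {i : Fin n} {q : Q i} {a : A} {r : V1 Q} :
    Red1Edge M (.st i q) (.letter a) r ↔ r = .st i ((M i).step q a) := by
  constructor
  · rintro ⟨⟩; rfl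
  · rintro rfl; exact .dfaStep i q a

end Red1Edge

namespace Red1

open LabeledGraph

variable {n : ℕ} {Q : Fin n → Type} {A : Type} {M : ∀ i, DFA' (Q i) A}

theorem walk_st_map_letter_iff {i : Fin n} {q : Q i} {r : V1 Q} {w : List A} :
    (Red1 M).Walk (.st i q) (w.map .letter) r ↔ r = .st i ((M i).evalFrom q w) := by
  induction w generalizing q with
  | nil => simp [Walk, DFA'.evalFrom, eq_comm]
  | cons a w ih =>
    simp only [List.map_cons, Walk]
    constructor
    · rintro ⟨r', hr', hw⟩
      rw [Red1Edge.st_letter_iff.1 hr'] at hw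
      exact ih.1 hw
    · exact fun h => ⟨_, .dfaStep i q a, ih.2 h⟩

theorem walk_sstar_map_letter (w : List A) : (Red1 M).Walk .sstar (w.map .letter) .sstar := by
  induction w with
  | nil => rfl
  | cons a w ih => exact ⟨_, .sstarLoop a, ih⟩

theorem eq_pstar_of_le {x : ℤ → Sym1 A} {u : ℤ → V1 Q}
    (hu : (Red1 M).IsPathOn x u univ) {j : ℤ} (hj : u j = .pstar) {j' : ℤ} (hj' : j' ≤ j) :
    u j' = .pstar := by
  induction j', hj' using Int.leInductionDown with
  | base => exact hj
  | pred j' _ ih =>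
    have h := hu (j' - 1) trivial
    rw [sub_add_cancel, ih] at h
    exact Red1Edge.eq_pstar_of_target h

theorem exit_pstar {x : ℤ → Sym1 A} {v : ℤ → V1 Q} (hv : (Red1 M).IsPathOn x v univ)
    {k : ℤ} (hk : v k = .pstar) (hk1 : v (k + 1) ≠ .pstar) :
    (∀ j < k, x j = .star) ∧ x k = .lm ∧ v (k + 1) = .sstar := by
  refine ⟨fun j hj => ?_, ?_⟩
  · have h := hv j trivial
    rw [eq_pstar_of_le hv hk hj.le, eq_pstar_of_le hv hk (show j + 1 ≤ k by omega)] at h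
    exact Red1Edge.eq_star_of_pstar h
  · have h := hv k trivial
    rw [hk] at h
    exact Red1Edge.of_pstar_of_ne h hk1

theorem mem_shift_induce_of_enter {x : ℤ → Sym1 A} {k : ℤ} {i : Fin n}
    (hstar : ∀ j < k, x j = .star) (hlm : x k = .lm) {R : ℤ → V1 Q}
    (hR : (Red1 M).IsPathOn x R (Ici (k + 1))) (hRk : R (k + 1) = .st i (M i).start) :
    x ∈ ((Red1 M).induce {v | v ≠ V1.pstar}).shift := by
  let E : ℤ → V1 Q := fun j => if j ≤ k then .pre i else .st i (M i).start
  have hE : (Red1 M).IsPathOn x E (univ ∩ Iio (k + 1)) := by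
    rintro j ⟨-, hj⟩
    rcases (show j < k ∨ j = k by simp only [mem_Iio] at hj; omega) with hjk | rfl
    · simp only [E, if_pos hjk.le, if_pos (show j + 1 ≤ k by omega), hstar j hjk]
      exact .preLoop i
    · simp only [E, le_refl, if_true, if_neg (show ¬ j + 1 ≤ j by omega), hlm]
      exact .enter i
  have hu := hE.piecewise (hR.mono inter_subset_right) (by simp [E, hRk])
  refine mem_shift_induce_iff.2 ⟨_, fun j hj => ?_, hu⟩
  have hmin := eq_pstar_of_le hu hj (min_le_left j k)
  simp [E, show min j k < k + 1 by omega] at hmin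

theorem exists_isPathOn_of_letters {x : ℤ → Sym1 A} {a : ℤ} (i : Fin n)
    (hlet : ∀ j, a ≤ j → ∃ b, x j = .letter b) :
    ∃ R, R a = .st i (M i).start ∧ (Red1 M).IsPathOn x R (Ici a) := by
  refine exists_isPathOn_Ici (S := range (V1.st i)) (fun j hj p ⟨q, hq⟩ => ?_) (mem_range_self _)
  obtain ⟨b, hb⟩ := hlet j hj
  exact ⟨_, mem_range_self ((M i).step q b), hq ▸ hb ▸ .dfaStep i q b⟩

theorem exists_isPathOn_of_letters_rm (hU : ⋃ i, (M i).lang = univ) {x : ℤ → Sym1 A} {a m : ℤ}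
    (ham : a ≤ m) (hlet : ∀ j, a ≤ j → j < m → ∃ b, x j = .letter b) (hrm : x m = .rm)
    {v : ℤ → V1 Q} (hv : (Red1 M).IsPathOn x v univ) {j₀ : Fin n} (hj₀ : (j₀ : ℕ) = 0)
    (hvm : v (m + 1) = .pre j₀) :
    ∃ i R, R a = .st i (M i).start ∧ (Red1 M).IsPathOn x R (Ici a) := by
  obtain ⟨t, rfl⟩ : ∃ t : ℕ, m = a + t := ⟨(m - a).toNat, by omega⟩
  obtain ⟨w, hw⟩ := Sym1.exists_map_letter_eq (l := window x a t)
    (forall_mem_window fun s hs => hlet _ (by omega) (by omega))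
  obtain ⟨i, hi⟩ := mem_iUnion.1 (hU ▸ mem_univ w)
  have hwalk : (Red1 M).Walk (.st i (M i).start) (window x a (t + 1)) (.pre j₀) := by
    rw [window_succ', ← hw, hrm, walk_append]
    exact ⟨_, walk_st_map_letter_iff.2 rfl, walk_singleton.2 (.exitAcc i _ j₀ hi hj₀)⟩
  obtain ⟨u, hua, hut, hu⟩ := hwalk.exists_isPathOn
  refine ⟨i, _, ?_, IsPathOn.piecewise (k := a + (t + 1 : ℕ)) (hu.mono fun j hj => ?_)
    (hv.mono (subset_univ _)) ?_⟩
  · simp [hua]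
  · simp_all
  · rw [hut, ← hvm]; push_cast; ring_nf

theorem mem_shift_induce_of_iUnion_eq_univ (hn : 0 < n) (hU : ⋃ i, (M i).lang = univ)
    {x : ℤ → Sym1 A} (hx : x ∈ (Red1 M).shift) :
    x ∈ ((Red1 M).induce {v | v ≠ V1.pstar}).shift := by
  obtain ⟨v, hv⟩ := mem_shift_iff.1 hx
  by_cases hnever : ∀ j, v j ≠ .pstar
  · exact mem_shift_induce_iff.2 ⟨v, hnever, hv⟩
  obtain ⟨j₀, hj₀⟩ := not_forall_not.1 hnever
  by_cases halways : ∀ j, j₀ ≤ j → v j = .pstar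
  · have hv' : ∀ j, v j = .pstar := fun j =>
      (le_total j j₀).elim (eq_pstar_of_le hv hj₀) (halways j)
    have hstar : ∀ j, x j = .star := fun j => by
      have h := hv j trivial
      rw [hv' j, hv' (j + 1)] at h
      exact Red1Edge.eq_star_of_pstar h
    exact mem_shift_induce_iff.2 ⟨fun _ => .pre ⟨0, hn⟩, fun _ => by simp,
      isPathOn_const (.preLoop _) fun j _ => hstar j⟩
  obtain ⟨k, hjk, hk, hk1⟩ := Int.exists_last_of_not_forall_ge hj₀ halways
  obtain ⟨hstar, hlm, hsk⟩ := exit_pstar hv (hk k hjk le_rfl) hk1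
  have hletter : ∀ j, v j = .sstar → v (j + 1) = .sstar → ∃ b, x j = .letter b := by
    intro j h h1
    have e := hv j trivial
    rw [h, h1] at e
    exact Red1Edge.exists_letter_of_sstar e
  by_cases hstay : ∀ j, k + 1 ≤ j → v j = .sstar
  · obtain ⟨R, hR0, hR⟩ := exists_isPathOn_of_letters (M := M) ⟨0, hn⟩
      fun j hj => hletter j (hstay j hj) (hstay (j + 1) (by omega))
    exact mem_shift_induce_of_enter hstar hlm hR hR0
  obtain ⟨m, hkm, hm, hm1⟩ := Int.exists_last_of_not_forall_ge hsk hstay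
  have e := hv m trivial
  rw [hm m hkm le_rfl] at e
  obtain ⟨hrm, j₁, hj₁, hvm⟩ := Red1Edge.of_sstar_of_ne e hm1
  obtain ⟨i, R, hR0, hR⟩ := exists_isPathOn_of_letters_rm hU hkm
    (fun j h1 h2 => hletter j (hm j h1 h2.le) (hm (j + 1) (by omega) (by omega))) hrm hv hj₁ hvm
  exact mem_shift_induce_of_enter hstar hlm hR hR0

theorem exists_mem_lang_of_walk {p q : V1 Q} {w : List A}
    (h : (Red1 M).Walk p (.lm :: (w.map .letter ++ [.rm])) q) (hp : p ≠ .pstar) :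
    ∃ i, w ∈ (M i).lang := by
  obtain ⟨r, hpr, hr⟩ := h
  obtain ⟨i, rfl, rfl⟩ := Red1Edge.of_lm hpr hp
  obtain ⟨r', hr', hr'q⟩ := walk_append.1 hr
  rw [walk_st_map_letter_iff.1 hr'] at hr'q
  exact ⟨i, Red1Edge.mem_accept_of_rm (walk_singleton.1 hr'q)⟩

theorem iUnion_lang_eq_univ_of_shift_subset (hn : 0 < n)
    (h : (Red1 M).shift ⊆ ((Red1 M).induce {v | v ≠ V1.pstar}).shift) :
    ⋃ i, (M i).lang = univ := by
  refine eq_univ_of_forall fun w => mem_iUnion.2 ?_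
  set l : List (Sym1 A) := .lm :: (w.map .letter ++ [.rm])
  have hG : pad .star l ∈ (Red1 M).shift := pad_mem_shift .pstarLoop (.preLoop ⟨0, hn⟩)
    ⟨.sstar, .pstarEnter,
      walk_append.2 ⟨_, walk_sstar_map_letter w, walk_singleton.2 (.sstarExit _ rfl)⟩⟩
  obtain ⟨u, hu, hpath⟩ := mem_shift_induce_iff.1 (h hG)
  have hwalk := IsPathOn.walk_window (k := 0) (t := l.length) (hpath.mono (subset_univ _))
  rw [window_pad] at hwalk
  exact exists_mem_lang_of_walk hwalk (hu 0)

end Red1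

theorem stmt10_general {n : ℕ} {Q : Fin n → Type} {A : Type} (hn : 0 < n)
    (M : ∀ i, DFA' (Q i) A) :
    (⋃ i, (M i).lang) = Set.univ ↔
      (Red1 M).shift ⊆ ((Red1 M).induce {v | v ≠ V1.pstar}).shift :=
  ⟨fun hU _ hx => Red1.mem_shift_induce_of_iUnion_eq_univ hn hU hx,
    Red1.iUnion_lang_eq_univ_of_shift_subset hn⟩

/-- Let `M_1, …, M_n` be DFAs over a common alphabet `Σ`, each with nonempty
accepting set and all states reachable from the initial state, and let `G` and
`H` be the graphs of the first reduction construction (`H` is the subgraph of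
`G` induced by all vertices except `p*`). Then `⋃ᵢ L(Mᵢ) = Σ*` iff
`⟨G⟩ ⊆ ⟨H⟩`. -/
theorem stmt10 {n : ℕ} {Q : Fin n → Type} {A : Type}
    [Fintype A] [∀ i, Fintype (Q i)] (hn : 0 < n)
    (M : ∀ i, DFA' (Q i) A)
    (hacc : ∀ i, ((M i).accept).Nonempty)
    (hreach : ∀ i (q : Q i), ∃ w, (M i).evalFrom (M i).start w = q) :
    (⋃ i, (M i).lang) = Set.univ ↔
      (Red1 M).shift ⊆ ((Red1 M).induce {v | v ≠ V1.pstar}).shift :=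
  stmt10_general hn M
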